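/- arXiv:2410.07214 — 4 statements merged into one kernel-verified Lean document; each statement's English description precedes it below -/
import Mathlib

section
/- Let 1 ≤ n < l, let a₁,…,aₘ and b₁,…,b_l be positive real numbers, and for each j ∈ {1,…,l} let β⁽ʲ⁾ ∈ ℝ^l and α⁽ʲ⁾ ∈ ℝ^m be exponent vectors; set Π_j = ∏_{i=1}^{l} b_i^{β_i⁽ʲ⁾} · ∏_{k=1}^{m} a_k^{α_k⁽ʲ⁾}. Let ξ_k⁽ʲ⁾ ∈ ℝ for j ∈ {1,…,n}, k ∈ {n+1,…,l}, and define Π'_j = Π_j · ∏_{k=n+1}^{l} Π_k^{ξ_k⁽ʲ⁾}. Suppose real numbers μ_k⁽ⁱ⁾ (1 ≤ i ≤ n, n+1 ≤ k ≤ l) satisfy, for every j ∈ {1,…,n} and every k ∈ {n+1,…,l}: Σ_{i=1}^{n} (β_i⁽ʲ⁾ + Σ_{p=n+1}^{l} ξ_p⁽ʲ⁾ β_i⁽ᵖ⁾) μ_k⁽ⁱ⁾ = -(β_k⁽ʲ⁾ + Σ_{p=n+1}^{l} ξ_p⁽ʲ⁾ β_k⁽ᵖ⁾). Then for all positive real numbers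 B_{n+1},…,B_l, setting a_k* = a_k for all k, b_i* = (∏_{k=n+1}^{l} B_k^{μ_k⁽ⁱ⁾}) b_i for i ∈ {1,…,n}, and b_k* = B_k b_k for k ∈ {n+1,…,l}, the transformed quantities Π_j* and Π'_j* (defined by the same formulas from the starred parameters) satisfy Π'_j* = Π'_j for every j ∈ {1,…,n}. -/
/-!
Taking logarithms, `Π'_j` becomes an affine function of `log b` whose linear part has the
effective exponents `w_i = β_i⁽ʲ⁾ + Σ_p ξ_p⁽ʲ⁾ β_i⁽ᵖ⁾`. The transformation multiplies each `b_i` by a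
factor `c_i`, so `log Π'_j` changes by `Σ_i w_i log c_i`. Since `log c_k = log B_k` for `k > n` and
`log c_i = Σ_k μ_k⁽ⁱ⁾ log B_k` for `i ≤ n`, exchanging the sums turns this into
`Σ_k (Σ_{i ≤ n} w_i μ_k⁽ⁱ⁾ + w_k) log B_k`, which vanishes term by term by Claim II.
-/

open Finset Real

theorem log_prod_rpow {ι : Type*} {s : Finset ι} {x : ι → ℝ} (hx : ∀ i ∈ s, 0 < x i) (e : ι → ℝ) :
    log (∏ i ∈ s, x i ^ e i) = ∑ i ∈ s, e i * log (x i) := by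
  rw [log_prod fun i hi => (rpow_pos_of_pos (hx i hi) _).ne']
  exact sum_congr rfl fun i hi => log_rpow (hx i hi) _

theorem prod_rpow_pos {ι : Type*} {s : Finset ι} {x : ι → ℝ} (hx : ∀ i ∈ s, 0 < x i) (e : ι → ℝ) :
    0 < ∏ i ∈ s, x i ^ e i :=
  prod_pos fun i hi => rpow_pos_of_pos (hx i hi) _

section Renormalization

variable {G ι κ : Type*} [Fintype ι] [Fintype κ]

/-- `Π'_j` of the paper as a function of `b`, with `S` playing the role of `{n+1,…,l}`. -/
noncomputable def renormalized (a : κ → ℝ) (β : G → ι → ℝ) (α : G → κ → ℝ) (ξ : G → G → ℝ)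
    (S : Finset G) (j : G) (x : ι → ℝ) : ℝ :=
  ((∏ i, x i ^ β j i) * ∏ q, a q ^ α j q) *
    ∏ k ∈ S, ((∏ i, x i ^ β k i) * ∏ q, a q ^ α k q) ^ ξ j k

variable {a : κ → ℝ} {x : ι → ℝ}

theorem monomial_pos (ha : ∀ q, 0 < a q) (hx : ∀ i, 0 < x i) (β : ι → ℝ) (α : κ → ℝ) :
    0 < (∏ i, x i ^ β i) * ∏ q, a q ^ α q :=
  mul_pos (prod_rpow_pos (fun i _ => hx i) β) (prod_rpow_pos (fun q _ => ha q) α)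

theorem log_monomial (ha : ∀ q, 0 < a q) (hx : ∀ i, 0 < x i) (β : ι → ℝ) (α : κ → ℝ) :
    log ((∏ i, x i ^ β i) * ∏ q, a q ^ α q) =
      ∑ i, β i * log (x i) + ∑ q, α q * log (a q) := by
  rw [log_mul (prod_rpow_pos (fun i _ => hx i) β).ne' (prod_rpow_pos (fun q _ => ha q) α).ne',
    log_prod_rpow (fun i _ => hx i), log_prod_rpow (fun q _ => ha q)]

theorem renormalized_pos (ha : ∀ q, 0 < a q) (hx : ∀ i, 0 < x i) (β : G → ι → ℝ)
    (α : G → κ → ℝ) (ξ : G → G → ℝ) (S : Finset G) (j : G) :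
    0 < renormalized a β α ξ S j x :=
  mul_pos (monomial_pos ha hx _ _) (prod_rpow_pos (fun _ _ => monomial_pos ha hx _ _) _)

theorem log_renormalized (ha : ∀ q, 0 < a q) (hx : ∀ i, 0 < x i) (β : G → ι → ℝ)
    (α : G → κ → ℝ) (ξ : G → G → ℝ) (S : Finset G) (j : G) :
    log (renormalized a β α ξ S j x) =
      ∑ i, (β j i + ∑ k ∈ S, ξ j k * β k i) * log (x i) +
        ∑ q, (α j q + ∑ k ∈ S, ξ j k * α k q) * log (a q) := by
  rw [renormalized, log_mul (monomial_pos ha hx _ _).ne'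
      (prod_rpow_pos (fun k _ => monomial_pos ha hx _ _) _).ne',
    log_prod_rpow (fun k _ => monomial_pos ha hx _ _), log_monomial ha hx]
  simp only [log_monomial ha hx, mul_add, add_mul, sum_add_distrib, sum_mul, mul_sum]
  rw [sum_comm (s := S), sum_comm (s := S)]
  simp only [mul_assoc]
  ring

theorem renormalized_mul_eq (ha : ∀ q, 0 < a q) (hx : ∀ i, 0 < x i) {c : ι → ℝ}
    (hc : ∀ i, 0 < c i) {β : G → ι → ℝ} {α : G → κ → ℝ} {ξ : G → G → ℝ} {S : Finset G} {j : G}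
    (h : ∑ i, (β j i + ∑ k ∈ S, ξ j k * β k i) * log (c i) = 0) :
    renormalized a β α ξ S j (fun i => c i * x i) = renormalized a β α ξ S j x := by
  have hcx : ∀ i, 0 < c i * x i := fun i => mul_pos (hc i) (hx i)
  refine log_injOn_pos (renormalized_pos ha hcx _ _ _ _ _) (renormalized_pos ha hx _ _ _ _ _) ?_
  simp only [log_renormalized ha hcx, log_renormalized ha hx, log_mul (hc _).ne' (hx _).ne',
    mul_add, sum_add_distrib, h, zero_add]

end Renormalization

theorem sum_mul_eq_zero_of_linear_system {ι : Type*} [Fintype ι] [DecidableEq ι] {S : Finset ι}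
    {w y t : ι → ℝ} {μ : ι → ι → ℝ} (hμ : ∀ k ∈ S, ∑ i ∈ Sᶜ, w i * μ k i = -w k)
    (hyS : ∀ k ∈ S, y k = t k) (hySc : ∀ i ∉ S, y i = ∑ k ∈ S, μ k i * t k) :
    ∑ i, w i * y i = 0 := by
  have hT : ∑ i ∈ Sᶜ, w i * y i = ∑ k ∈ S, (∑ i ∈ Sᶜ, w i * μ k i) * t k := by
    rw [sum_congr rfl fun i hi => by rw [hySc i (mem_compl.mp hi), mul_sum]]
    rw [sum_comm]
    simp only [sum_mul, mul_assoc]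
  rw [← sum_add_sum_compl S, hT, sum_congr rfl fun k hk => by rw [hyS k hk],
    ← sum_add_distrib]
  exact sum_eq_zero fun k hk => by rw [hμ k hk]; ring

/-- Indices are `0`-based: `i < n` stands for `1,…,n` and `n ≤ k` for `n+1,…,l`;
`β j i = β_i⁽ʲ⁾`, `ξ j k = ξ_k⁽ʲ⁾` and `μ k i = μ_k⁽ⁱ⁾`. -/
theorem stmt_5_general (m n l : ℕ)
    (a : Fin m → ℝ) (b : Fin l → ℝ)
    (ha : ∀ k, 0 < a k) (hb : ∀ i, 0 < b i)
    (β : Fin l → Fin l → ℝ) (α : Fin l → Fin m → ℝ)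
    (ξ : Fin l → Fin l → ℝ) (μ : Fin l → Fin l → ℝ)
    (hμ : ∀ j : Fin l, (j : ℕ) < n → ∀ k : Fin l, n ≤ (k : ℕ) →
      ∑ i ∈ Finset.univ.filter (fun i : Fin l => (i : ℕ) < n),
          (β j i + ∑ p ∈ Finset.univ.filter (fun p : Fin l => n ≤ (p : ℕ)),
            ξ j p * β p i) * μ k i
        = -(β j k + ∑ p ∈ Finset.univ.filter (fun p : Fin l => n ≤ (p : ℕ)),
            ξ j p * β p k))
    (B : Fin l → ℝ) (hB : ∀ k, 0 < B k) :
    ∀ j : Fin l, (j : ℕ) < n →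
      (fun bb : Fin l → ℝ =>
          ((∏ i, bb i ^ β j i) * ∏ k, a k ^ α j k) *
            ∏ k ∈ Finset.univ.filter (fun k : Fin l => n ≤ (k : ℕ)),
              ((∏ i, bb i ^ β k i) * ∏ q, a q ^ α k q) ^ ξ j k)
        (fun i : Fin l =>
          if (i : ℕ) < n then
            (∏ k ∈ Finset.univ.filter (fun k : Fin l => n ≤ (k : ℕ)),
              B k ^ μ k i) * b i
          else B i * b i)
      =
      (fun bb : Fin l → ℝ =>
          ((∏ i, bb i ^ β j i) * ∏ k, a k ^ α j k) *
            ∏ k ∈ Finset.univ.filter (fun k : Fin l => n ≤ (k : ℕ)),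
              ((∏ i, bb i ^ β k i) * ∏ q, a q ^ α k q) ^ ξ j k) b := by
  intro j hj
  set S : Finset (Fin l) := univ.filter fun k : Fin l => n ≤ (k : ℕ)
  have hSc : univ.filter (fun i : Fin l => (i : ℕ) < n) = Sᶜ := by
    ext i
    simp [S]
  set c : Fin l → ℝ := fun i => if (i : ℕ) < n then ∏ k ∈ S, B k ^ μ k i else B i
  have hc : ∀ i, 0 < c i := fun i => by
    unfold c
    split_ifs
    exacts [prod_rpow_pos (fun k _ => hB k) _, hB i]
  have hscaled : (fun i : Fin l => if (i : ℕ) < n then (∏ k ∈ S, B k ^ μ k i) * b i else B i * b i)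
      = fun i => c i * b i := funext fun i => (ite_mul _ _ _ _).symm
  show renormalized a β α ξ S j _ = renormalized a β α ξ S j b
  rw [hscaled]
  refine renormalized_mul_eq ha hb hc (sum_mul_eq_zero_of_linear_system (S := S)
    (t := fun k => log (B k)) (μ := μ) (fun k hk => ?_) (fun k hk => ?_) (fun i hi => ?_))
  · rw [← hSc]
    exact hμ j hj k (mem_filter.mp hk).2
  · simp only [c, if_neg (not_lt.mpr (mem_filter.mp hk).2)]
  · have hin : (i : ℕ) < n := by simpa [S] using hi
    simp only [c, if_pos hin]
    exact log_prod_rpow (fun k _ => hB k) _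

/-- Invariance of the renormalized dimensionless quantities
`Π'_j = Π_j · Π_{k=n+1}^{l} Π_k^{ξ_k⁽ʲ⁾}` (for `j ∈ {1,…,n}`) under the
renormalization group of incomplete similarity in the MDDP construction.
Indices `i` with `(i : ℕ) < n` correspond to `b_1,…,b_n` and indices with
`n ≤ (i : ℕ)` to `b_{n+1},…,b_l`.  Here `β j i = β_i⁽ʲ⁾`, `α j k = α_k⁽ʲ⁾`,
`ξ j k = ξ_k⁽ʲ⁾`, and `μ k i = μ_k⁽ⁱ⁾`.  If the `μ_k⁽ⁱ⁾` solve the linear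
systems of Claim II, then the transformation `a_k* = a_k`,
`b_i* = (Π_{k ≥ n} B_k^{μ_k⁽ⁱ⁾}) b_i` for `i < n`, `b_k* = B_k b_k` for
`k ≥ n`, leaves every `Π'_j` with `j < n` unchanged. -/
theorem stmt_5 (m n l : ℕ) (hn : 1 ≤ n) (hnl : n < l)
    (a : Fin m → ℝ) (b : Fin l → ℝ)
    (ha : ∀ k, 0 < a k) (hb : ∀ i, 0 < b i)
    (β : Fin l → Fin l → ℝ) (α : Fin l → Fin m → ℝ)
    (ξ : Fin l → Fin l → ℝ) (μ : Fin l → Fin l → ℝ)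
    (hμ : ∀ j : Fin l, (j : ℕ) < n → ∀ k : Fin l, n ≤ (k : ℕ) →
      ∑ i ∈ Finset.univ.filter (fun i : Fin l => (i : ℕ) < n),
          (β j i + ∑ p ∈ Finset.univ.filter (fun p : Fin l => n ≤ (p : ℕ)),
            ξ j p * β p i) * μ k i
        = -(β j k + ∑ p ∈ Finset.univ.filter (fun p : Fin l => n ≤ (p : ℕ)),
            ξ j p * β p k))
    (B : Fin l → ℝ) (hB : ∀ k, 0 < B k) :
    ∀ j : Fin l, (j : ℕ) < n →
      (fun bb : Fin l → ℝ =>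
          ((∏ i, bb i ^ β j i) * ∏ k, a k ^ α j k) *
            ∏ k ∈ Finset.univ.filter (fun k : Fin l => n ≤ (k : ℕ)),
              ((∏ i, bb i ^ β k i) * ∏ q, a q ^ α k q) ^ ξ j k)
        (fun i : Fin l =>
          if (i : ℕ) < n then
            (∏ k ∈ Finset.univ.filter (fun k : Fin l => n ≤ (k : ℕ)),
              B k ^ μ k i) * b i
          else B i * b i)
      =
      (fun bb : Fin l → ℝ =>
          ((∏ i, bb i ^ β j i) * ∏ k, a k ^ α j k) *
            ∏ k ∈ Finset.univ.filter (fun k : Fin l => n ≤ (k : ℕ)),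
              ((∏ i, bb i ^ β k i) * ∏ q, a q ^ α k q) ^ ξ j k) b :=
  stmt_5_general m n l a b ha hb β α ξ μ hμ B hB
end

section
/- In the setting of the renormalization group for incomplete similarity: let 1 ≤ n < l, let a₁,…,aₘ, b₁,…,b_l, a be positive reals, β ∈ ℝ with β ≠ 0, β₁,…,β_l, α₁,…,αₘ ∈ ℝ, exponent vectors β⁽ʲ⁾ ∈ ℝ^l, α⁽ʲ⁾ ∈ ℝ^m for j ∈ {1,…,l}, Π_j = ∏_i b_i^{β_i⁽ʲ⁾} ∏_k a_k^{α_k⁽ʲ⁾}, Π = a^β ∏_i b_i^{β_i} ∏_k a_k^{α_k}, incomplete-similarity exponents ξ_k ∈ ℝ for k ∈ {n+1,…,l}, and Π' = Π · ∏_{k=n+1}^{l} Π_k^{ξ_k}. Let μ_k⁽ⁱ⁾ ∈ ℝ (1 ≤ i ≤ n, n+1 ≤ k ≤ l) be given, and for each j ∈ {n+1,…,l} define μ_j = -(1/β)·[ Σ_{i=1}^{n} β_i μ_j⁽ⁱ⁾ + Σ_{i=1}^{n} (Σ_{k=n+1}^{l} ξ_k β_i⁽ᵏ⁾) μ_j⁽ⁱ⁾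 + β_j + Σ_{k=n+1}^{l} ξ_k β_j⁽ᵏ⁾ ]. Then for all positive B_{n+1},…,B_l, under the transformation a_k* = a_k, b_i* = (∏_{k=n+1}^{l} B_k^{μ_k⁽ⁱ⁾}) b_i for i ≤ n, b_k* = B_k b_k for k > n, and a* = (∏_{k=n+1}^{l} B_k^{μ_k}) a, the transformed quantity Π'* (defined by the same formulas from the starred parameters) satisfies Π'* = Π'. -/
/-!
Collecting exponents, `Π' = a^β · ∏ᵢ bᵢ^{γᵢ} · C` with `γᵢ = βᵢ + Σ_{k>n} ξ_k βᵢ⁽ᵏ⁾` and `C`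
depending only on the `a_k`.  The transformation multiplies `a^β · ∏ᵢ bᵢ^{γᵢ}` by
`∏_{k>n} B_k^{β μ_k + Σ_{i≤n} γᵢ μ_k⁽ⁱ⁾ + γ_k}`, and `μ_k` is precisely the exponent making each
of these powers vanish.
-/

open Finset Real

section Monomials

variable {ι κ : Type*}

lemma prod_rpow_rpow {s : Finset ι} {x : ι → ℝ} (hx : ∀ i ∈ s, 0 ≤ x i) (e : ι → ℝ) (c : ℝ) :
    (∏ i ∈ s, x i ^ e i) ^ c = ∏ i ∈ s, x i ^ (c * e i) := by
  rw [← finsetProd_rpow s _ (fun i hi => rpow_nonneg (hx i hi) _)]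
  exact prod_congr rfl fun i hi => by rw [← rpow_mul (hx i hi), mul_comm]

lemma prod_prod_rpow_rpow {s : Finset κ} {t : Finset ι} {x : ι → ℝ} (hx : ∀ i ∈ t, 0 < x i)
    (e : κ → ι → ℝ) (c : κ → ℝ) :
    ∏ k ∈ s, (∏ i ∈ t, x i ^ e k i) ^ c k = ∏ i ∈ t, x i ^ ∑ k ∈ s, c k * e k i := by
  rw [prod_congr rfl fun k _ => prod_rpow_rpow (fun i hi => (hx i hi).le) (e k) (c k), prod_comm]
  exact prod_congr rfl fun i hi => (rpow_sum_of_pos (hx i hi) _ _).symm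

lemma mul_prod_rpow_mul_prod_rpow [Fintype ι] {s : Finset κ} (x₀ : ℝ) {x : ι → ℝ}
    (hx : ∀ i, 0 < x i) (β : ℝ) (e : ι → ℝ) (A : ℝ) (E : κ → ι → ℝ) {A' : κ → ℝ}
    (hA' : ∀ k ∈ s, 0 ≤ A' k) (ξ : κ → ℝ) :
    (x₀ ^ β * (∏ i, x i ^ e i) * A) * ∏ k ∈ s, ((∏ i, x i ^ E k i) * A' k) ^ ξ k
      = x₀ ^ β * (∏ i, x i ^ (e i + ∑ k ∈ s, ξ k * E k i)) * (A * ∏ k ∈ s, A' k ^ ξ k) := by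
  have hprod : ∀ k, 0 ≤ ∏ i, x i ^ E k i := fun k =>
    prod_nonneg fun i _ => (rpow_pos_of_pos (hx i) _).le
  rw [prod_congr rfl fun k hk => mul_rpow (hprod k) (hA' k hk), prod_mul_distrib,
    prod_prod_rpow_rpow fun i _ => hx i]
  simp_rw [rpow_add (hx _), prod_mul_distrib]
  ring

lemma prod_ite_mul_rpow [Fintype ι] (p : ι → Prop) [DecidablePred p] {s : Finset ι}
    (hs : ∀ i, i ∈ s ↔ ¬ p i) {B b : ι → ℝ} (hB : ∀ i, 0 < B i) (hb : ∀ i, 0 < b i)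
    (μ : ι → ι → ℝ) (γ : ι → ℝ) :
    ∏ i, (if p i then (∏ k ∈ s, B k ^ μ k i) * b i else B i * b i) ^ γ i
      = (∏ k ∈ s, B k ^ (∑ i with p i, γ i * μ k i + γ k)) * ∏ i, b i ^ γ i := by
  have hs' : univ.filter (¬ p ·) = s := by ext i; simp [hs]
  have hfactor : ∀ i, (if p i then (∏ k ∈ s, B k ^ μ k i) * b i else B i * b i) ^ γ i
      = (if p i then (∏ k ∈ s, B k ^ μ k i) ^ γ i else B i ^ γ i) * b i ^ γ i := by
    intro i
    have hC : 0 ≤ ∏ k ∈ s, B k ^ μ k i := prod_nonneg fun k _ => (rpow_pos_of_pos (hB k) _).le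
    split_ifs
    · exact mul_rpow hC (hb i).le
    · exact mul_rpow (hB i).le (hb i).le
  simp_rw [hfactor, prod_mul_distrib, prod_ite, hs', prod_prod_rpow_rpow fun k _ => hB k,
    rpow_add (hB _), prod_mul_distrib]

theorem rpow_mul_prod_rpow_invariant [Fintype ι] (p : ι → Prop) [DecidablePred p]
    {s : Finset ι} (hs : ∀ i, i ∈ s ↔ ¬ p i) {B b : ι → ℝ} (hB : ∀ i, 0 < B i)
    (hb : ∀ i, 0 < b i) {x₀ : ℝ} (hx₀ : 0 < x₀) (β : ℝ) (γ : ι → ℝ) (μ : ι → ι → ℝ)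
    {ν : ι → ℝ} (hν : ∀ k ∈ s, β * ν k + (∑ i with p i, γ i * μ k i + γ k) = 0) :
    ((∏ k ∈ s, B k ^ ν k) * x₀) ^ β *
        ∏ i, (if p i then (∏ k ∈ s, B k ^ μ k i) * b i else B i * b i) ^ γ i
      = x₀ ^ β * ∏ i, b i ^ γ i := by
  have hBν : 0 ≤ ∏ k ∈ s, B k ^ ν k := prod_nonneg fun k _ => (rpow_pos_of_pos (hB k) _).le
  have hunit : (∏ k ∈ s, B k ^ (β * ν k)) *
      ∏ k ∈ s, B k ^ (∑ i with p i, γ i * μ k i + γ k) = 1 := by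
    rw [← prod_mul_distrib]
    refine prod_eq_one fun k hk => ?_
    rw [← rpow_add (hB k), hν k hk, rpow_zero]
  rw [prod_ite_mul_rpow p hs hB hb, mul_rpow hBν hx₀.le, prod_rpow_rpow fun k _ => (hB k).le]
  linear_combination (x₀ ^ β * ∏ i, b i ^ γ i) * hunit

end Monomials

theorem stmt_6_general (m n l : ℕ)
    (a : Fin m → ℝ) (b : Fin l → ℝ) (aq : ℝ)
    (ha : ∀ k, 0 < a k) (hb : ∀ i, 0 < b i) (haq : 0 < aq)
    (β : ℝ) (hβ : β ≠ 0) (βv : Fin l → ℝ) (αv : Fin m → ℝ)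
    (βM : Fin l → Fin l → ℝ) (αM : Fin l → Fin m → ℝ)
    (ξ : Fin l → ℝ) (μ : Fin l → Fin l → ℝ)
    (B : Fin l → ℝ) (hB : ∀ k, 0 < B k) :
    let hi := Finset.univ.filter (fun k : Fin l => n ≤ (k : ℕ))
    let lo := Finset.univ.filter (fun i : Fin l => (i : ℕ) < n)
    let μv : Fin l → ℝ := fun j =>
      -(1 / β) * ((∑ i ∈ lo, βv i * μ j i) +
        (∑ i ∈ lo, (∑ k ∈ hi, ξ k * βM k i) * μ j i) +
        βv j + ∑ k ∈ hi, ξ k * βM k j)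
    let bstar : Fin l → ℝ := fun i =>
      if (i : ℕ) < n then (∏ k ∈ hi, B k ^ μ k i) * b i else B i * b i
    let astar : ℝ := (∏ k ∈ hi, B k ^ μv k) * aq
    (astar ^ β * (∏ i, bstar i ^ βv i) * ∏ k, a k ^ αv k) *
        ∏ k ∈ hi, ((∏ i, bstar i ^ βM k i) * ∏ q, a q ^ αM k q) ^ ξ k
      = (aq ^ β * (∏ i, b i ^ βv i) * ∏ k, a k ^ αv k) *
        ∏ k ∈ hi, ((∏ i, b i ^ βM k i) * ∏ q, a q ^ αM k q) ^ ξ k := by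
  intro hi lo μv bstar astar
  set γ : Fin l → ℝ := fun i => βv i + ∑ k ∈ hi, ξ k * βM k i
  have hhi : ∀ i, i ∈ hi ↔ ¬ (i : ℕ) < n := fun i => by simp [hi]
  have hbstar : ∀ i, 0 < bstar i := fun i => by
    by_cases h : (i : ℕ) < n
    · simpa [bstar, h] using mul_pos (prod_pos fun k _ => rpow_pos_of_pos (hB k) _) (hb i)
    · simpa [bstar, h] using mul_pos (hB i) (hb i)
  have hμv : ∀ k ∈ hi, β * μv k + (∑ i ∈ lo, γ i * μ k i + γ k) = 0 := fun k _ => by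
    simp only [μv, γ, add_mul, sum_add_distrib]
    field_simp
    ring
  have hA : ∀ k ∈ hi, 0 ≤ ∏ q, a q ^ αM k q := fun k _ =>
    prod_nonneg fun q _ => (rpow_pos_of_pos (ha q) _).le
  rw [mul_prod_rpow_mul_prod_rpow _ hbstar _ _ _ _ hA,
    mul_prod_rpow_mul_prod_rpow _ hb _ _ _ _ hA]
  congr 1
  exact rpow_mul_prod_rpow_invariant (fun i : Fin l => (i : ℕ) < n) hhi hB hb haq β γ μ hμv

/-- Invariance of the renormalized quantity of interest
`Π' = Π · Π_{k=n+1}^{l} Π_k^{ξ_k}` under the renormalization group of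
incomplete similarity in the MDDP construction.  Here
`Π = a^β · Π_i b_i^{β_i} · Π_k a_k^{α_k}` (with `aq = a`, `βv i = β_i`,
`αv k = α_k`), `Π_k` has exponents `βM k i = β_i⁽ᵏ⁾`, `αM k q = α_q⁽ᵏ⁾`,
`ξ k = ξ_k`, and `μ k i = μ_k⁽ⁱ⁾`.  With
`μ_j = -(1/β)[Σ_{i<n} β_i μ_j⁽ⁱ⁾ + Σ_{i<n}(Σ_{k≥n} ξ_k β_i⁽ᵏ⁾) μ_j⁽ⁱ⁾
  + β_j + Σ_{k≥n} ξ_k β_j⁽ᵏ⁾]`, the transformation `a_k* = a_k`,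
`b_i* = (Π_{k≥n} B_k^{μ_k⁽ⁱ⁾}) b_i` for `i < n`, `b_k* = B_k b_k` for
`k ≥ n`, and `a* = (Π_{k≥n} B_k^{μ_k}) a` leaves `Π'` unchanged. -/
theorem stmt_6 (m n l : ℕ) (hn : 1 ≤ n) (hnl : n < l)
    (a : Fin m → ℝ) (b : Fin l → ℝ) (aq : ℝ)
    (ha : ∀ k, 0 < a k) (hb : ∀ i, 0 < b i) (haq : 0 < aq)
    (β : ℝ) (hβ : β ≠ 0) (βv : Fin l → ℝ) (αv : Fin m → ℝ)
    (βM : Fin l → Fin l → ℝ) (αM : Fin l → Fin m → ℝ)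
    (ξ : Fin l → ℝ) (μ : Fin l → Fin l → ℝ)
    (B : Fin l → ℝ) (hB : ∀ k, 0 < B k) :
    let hi := Finset.univ.filter (fun k : Fin l => n ≤ (k : ℕ))
    let lo := Finset.univ.filter (fun i : Fin l => (i : ℕ) < n)
    let μv : Fin l → ℝ := fun j =>
      -(1 / β) * ((∑ i ∈ lo, βv i * μ j i) +
        (∑ i ∈ lo, (∑ k ∈ hi, ξ k * βM k i) * μ j i) +
        βv j + ∑ k ∈ hi, ξ k * βM k j)
    let bstar : Fin l → ℝ := fun i =>
      if (i : ℕ) < n then (∏ k ∈ hi, B k ^ μ k i) * b i else B i * b i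
    let astar : ℝ := (∏ k ∈ hi, B k ^ μv k) * aq
    (astar ^ β * (∏ i, bstar i ^ βv i) * ∏ k, a k ^ αv k) *
        ∏ k ∈ hi, ((∏ i, bstar i ^ βM k i) * ∏ q, a q ^ αM k q) ^ ξ k
      = (aq ^ β * (∏ i, b i ^ βv i) * ∏ k, a k ^ αv k) *
        ∏ k ∈ hi, ((∏ i, b i ^ βM k i) * ∏ q, a q ^ αM k q) ^ ξ k :=
  stmt_6_general m n l a b aq ha hb haq β hβ βv αv βM αM ξ μ B hB
end

section
/- Let m, l be positive integers, Λ an invertible m×m real matrix, and Γ an m×l real matrix. For every invertible l×l real matrix B, the matrix Δ = Γᵀ(Λ⁻¹)ᵀ is the unique l×m matrix satisfying B Δ = A(B), where A(B) is the l×m matrix whose j-th row is (Λ⁻¹Γβ⁽ʲ⁾)ᵀ and β⁽ʲ⁾ denotes the j-th row of B. In particular, the solution Δ of the similarity-group matrix equation is the same for every choice of invertible construction matrix B, i.e. Buckingham's similarity group is independent of the choice of dimensionless construction. -/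
open Matrix

theorem Matrix.of_mulVec_rows {l n k R : Type*} [Fintype n] [CommSemiring R]
    (M : Matrix k n R) (B : Matrix l n R) :
    (Matrix.of fun j => M *ᵥ B j) = B * Mᵀ := by
  ext j i
  rw [mul_apply_eq_vecMul, vecMul_transpose, of_apply]

theorem Matrix.mul_left_cancel_iff_of_isUnit_det {n k R : Type*} [Fintype n] [DecidableEq n]
    [CommRing R] {B : Matrix n n R} (hB : IsUnit B.det) {X Y : Matrix n k R} :
    B * X = B * Y ↔ X = Y :=
  ⟨fun h => by
    rw [← nonsing_inv_mul_cancel_left B X hB, h, nonsing_inv_mul_cancel_left B Y hB],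
    congrArg (B * ·)⟩

theorem stmt_8_general (m l : ℕ)
    (Λ : Matrix (Fin m) (Fin m) ℝ)
    (Γ : Matrix (Fin m) (Fin l) ℝ) :
    ∀ B : Matrix (Fin l) (Fin l) ℝ, IsUnit B.det →
      ∀ Δ : Matrix (Fin l) (Fin m) ℝ,
        B * Δ =
            (Matrix.of fun (j : Fin l) (k : Fin m) =>
              Λ⁻¹.mulVec (Γ.mulVec (B j)) k) ↔
          Δ = Γᵀ * (Λ⁻¹)ᵀ := by
  intro B hB Δ
  have hA : (Matrix.of fun (j : Fin l) (k : Fin m) => Λ⁻¹.mulVec (Γ.mulVec (B j)) k)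
      = B * (Γᵀ * (Λ⁻¹)ᵀ) := by
    simp only [mulVec_mulVec, ← transpose_mul]
    exact of_mulVec_rows (Λ⁻¹ * Γ) B
  rw [hA, mul_left_cancel_iff_of_isUnit_det hB]

/-- For every invertible construction matrix `B`, the matrix
`Δ = Γᵀ(Λ⁻¹)ᵀ` is the unique solution of `BΔ = A(B)`, where `A(B)` is the
`l × m` matrix whose `j`-th row is `(Λ⁻¹Γβ⁽ʲ⁾)ᵀ` and `β⁽ʲ⁾` is the `j`-th
row of `B`.  In particular Buckingham's similarity group is independent of
the choice of dimensionless construction. -/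
theorem stmt_8 (m l : ℕ) (hm : 0 < m) (hl : 0 < l)
    (Λ : Matrix (Fin m) (Fin m) ℝ) (hΛ : IsUnit Λ.det)
    (Γ : Matrix (Fin m) (Fin l) ℝ) :
    ∀ B : Matrix (Fin l) (Fin l) ℝ, IsUnit B.det →
      ∀ Δ : Matrix (Fin l) (Fin m) ℝ,
        B * Δ =
            (Matrix.of fun (j : Fin l) (k : Fin m) =>
              Λ⁻¹.mulVec (Γ.mulVec (B j)) k) ↔
          Δ = Γᵀ * (Λ⁻¹)ᵀ :=
  stmt_8_general m l Λ Γ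
end

section
/- Let n, K, ρ, R be positive real numbers, let τ₀, τ_w be real with 0 ≤ τ₀ < τ_w, set φ = τ₀/τ_w, Ū(τ₀, τ_w) = nR·(τ_w/K)^{1/n}·J(φ, n) with J(φ, n) = (1-φ)^{(n+1)/n}·[ (1-φ)²/(3n+1) + 2φ(1-φ)/(2n+1) + φ²/(n+1) ] > 0, and f(τ₀, τ_w) = 2τ_w/(ρ·Ū(τ₀, τ_w)²). Then for every positive real B₁: f(B₁τ₀, B₁τ_w) = B₁^{(n-2)/n}·f(τ₀, τ_w). -/
/-!
Since `J` sees only the ratio `τ₀/τ_w`, the mean velocity `Ū` is homogeneous of degree `1/n`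
in `(τ₀, τ_w)`; hence `f = 2τ_w/(ρŪ²)` is homogeneous of degree `1 - 2/n = (n-2)/n`.
-/

namespace HerschelBulkley

lemma rpow_sub_two_div_mul_sq_rpow_inv {n B : ℝ} (hn : n ≠ 0) (hB : 0 < B) :
    B ^ ((n - 2) / n) * (B ^ (1 / n)) ^ 2 = B := by
  rw [← Real.rpow_mul_natCast hB.le, ← Real.rpow_add hB]
  convert Real.rpow_one B using 2
  field_simp
  ring

lemma meanVelocity_smul (J : ℝ → ℝ) {n R K B t0 tw : ℝ} (hB : 0 < B) (hK : 0 ≤ K)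
    (htw : 0 ≤ tw) :
    n * R * (B * tw / K) ^ (1 / n) * J (B * t0 / (B * tw)) =
      B ^ (1 / n) * (n * R * (tw / K) ^ (1 / n) * J (t0 / tw)) := by
  rw [mul_div_mul_left _ _ hB.ne', mul_div_assoc, Real.mul_rpow hB.le (div_nonneg htw hK)]
  ring

lemma frictionFactor_of_meanVelocity_smul {n ρ B tw U : ℝ} (hn : n ≠ 0) (hB : 0 < B) :
    2 * (B * tw) / (ρ * (B ^ (1 / n) * U) ^ 2) = B ^ ((n - 2) / n) * (2 * tw / (ρ * U ^ 2)) := by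
  -- No condition on `ρ * U`: if it vanishes, both sides are `0` by the convention `x / 0 = 0`.
  have hBn : (B ^ (1 / n)) ^ 2 ≠ 0 := by positivity
  rw [eq_div_of_mul_eq hBn (rpow_sub_two_div_mul_sq_rpow_inv hn hB)]
  ring

end HerschelBulkley

open HerschelBulkley in
theorem stmt_17_general (n K ρ R : ℝ) (hn : 0 < n) (hK : 0 < K)
    (τ₀ τw : ℝ) (hτ₀ : 0 ≤ τ₀) (hlt : τ₀ < τw) :
    let J : ℝ → ℝ := fun φ => (1 - φ) ^ ((n + 1) / n) *
      ((1 - φ) ^ 2 / (3 * n + 1) + 2 * φ * (1 - φ) / (2 * n + 1) +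
        φ ^ 2 / (n + 1))
    let Ubar : ℝ → ℝ → ℝ := fun t0 tw =>
      n * R * (tw / K) ^ (1 / n) * J (t0 / tw)
    let f : ℝ → ℝ → ℝ := fun t0 tw => 2 * tw / (ρ * Ubar t0 tw ^ 2)
    0 < J (τ₀ / τw) →
    ∀ B₁ : ℝ, 0 < B₁ →
      f (B₁ * τ₀) (B₁ * τw) = B₁ ^ ((n - 2) / n) * f τ₀ τw := by
  intro J Ubar f _ B₁ hB₁
  have hUbar : Ubar (B₁ * τ₀) (B₁ * τw) = B₁ ^ (1 / n) * Ubar τ₀ τw :=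
    meanVelocity_smul J hB₁ hK.le (hτ₀.trans hlt.le)
  simp only [f, hUbar]
  exact frictionFactor_of_meanVelocity_smul hn.ne' hB₁

/-- Renormalization group for the friction factor of laminar
Herschel-Bulkley pipe flow in friction coordinates: with
`Ū(τ₀, τ_w) = nR (τ_w/K)^{1/n} J(τ₀/τ_w, n)` and
`f(τ₀, τ_w) = 2τ_w/(ρ Ū(τ₀, τ_w)²)`, scaling `τ₀` and `τ_w` by `B₁ > 0`
scales the friction factor by `B₁^{(n-2)/n}`. -/
theorem stmt_17 (n K ρ R : ℝ) (hn : 0 < n) (hK : 0 < K) (hρ : 0 < ρ)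
    (hR : 0 < R) (τ₀ τw : ℝ) (hτ₀ : 0 ≤ τ₀) (hlt : τ₀ < τw) :
    let J : ℝ → ℝ := fun φ => (1 - φ) ^ ((n + 1) / n) *
      ((1 - φ) ^ 2 / (3 * n + 1) + 2 * φ * (1 - φ) / (2 * n + 1) +
        φ ^ 2 / (n + 1))
    let Ubar : ℝ → ℝ → ℝ := fun t0 tw =>
      n * R * (tw / K) ^ (1 / n) * J (t0 / tw)
    let f : ℝ → ℝ → ℝ := fun t0 tw => 2 * tw / (ρ * Ubar t0 tw ^ 2)
    0 < J (τ₀ / τw) →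
    ∀ B₁ : ℝ, 0 < B₁ →
      f (B₁ * τ₀) (B₁ * τw) = B₁ ^ ((n - 2) / n) * f τ₀ τw :=
  stmt_17_general n K ρ R hn hK τ₀ τw hτ₀ hlt
end
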